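/- In the unit-demand pricing problem, let α > 0 and S(α) = E[max_i v_i · 1{max_i v_i ≥ α}]. For any price vector P, the price vector P' obtained by setting every price greater than α to +∞ (i.e., removing those items) satisfies R_{P'} ≥ R_P - S(α). -/

import Mathlib

open MeasureTheory Classical

/-- The item bought by a quasi-linear unit-demand buyer with values `v` facing prices `p`:
the item with the largest nonnegative value-minus-price gap, ties broken consistently
(by least index); `none` if no item has a nonnegative gap. -/
noncomputable def soldItem {n : ℕ} (v p : Fin n → ℝ) : Option (Fin n) :=
  let s := Finset.univ.filter fun i => 0 ≤ v i - p i ∧ ∀ j, v j - p j ≤ v i - p i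
  if h : s.Nonempty then some (s.min' h) else none

/-- The seller's (pointwise) revenue: the price of the item bought, or `0` if no sale. -/
noncomputable def revenue {n : ℕ} (v p : Fin n → ℝ) : ℝ :=
  ((soldItem v p).map p).getD 0

/-- The seller's revenue when the sale is restricted to the items in `S` (i.e. all items
outside `S` are priced at `+∞` and can never be bought). -/
noncomputable def revenueOn {n : ℕ} (S : Finset (Fin n)) (v p : Fin n → ℝ) : ℝ :=
  let s := S.filter fun i => 0 ≤ v i - p i ∧ ∀ j ∈ S, v j - p j ≤ v i - p i
  if h : s.Nonempty then p (s.min' h) else 0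

/-!
Let `i` be the item sold at prices `P`. If `P i ≤ α`, then `i` is still an optimal item
among the cheap ones, and every optimal cheap item is optimal overall, so the least-index
tie-breaking picks `i` again and the revenue is unchanged. If `P i > α`, the lost revenue is
`P i ≤ v i ≤ max v`, and `max v > α`, so it is paid for by the tail `max v · 1{max v ≥ α}`.
Integrating this pointwise inequality gives the theorem.
-/

namespace UnitDemand

variable {n : ℕ} (v p : Fin n → ℝ)

noncomputable def bestOn (S : Finset (Fin n)) : Finset (Fin n) :=
  S.filter fun i => 0 ≤ v i - p i ∧ ∀ j ∈ S, v j - p j ≤ v i - p i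

theorem revenueOn_eq_dite (S : Finset (Fin n)) :
    revenueOn S v p =
      if h : (bestOn v p S).Nonempty then p ((bestOn v p S).min' h) else 0 :=
  rfl

theorem revenue_eq_revenueOn_univ : revenue v p = revenueOn Finset.univ v p := by
  simp only [revenue, soldItem, revenueOn, Finset.mem_univ, true_imp_iff]
  split <;> rfl

theorem revenueOn_nonneg {p : Fin n → ℝ} (hp : ∀ i, 0 ≤ p i) (S : Finset (Fin n)) :
    0 ≤ revenueOn S v p := by
  rw [revenueOn_eq_dite]
  split
  · exact hp _
  · exact le_rfl

variable {v p} {S T : Finset (Fin n)} {i : Fin n}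

theorem mem_bestOn_of_subset (hST : S ⊆ T) (hiS : i ∈ S) (hi : i ∈ bestOn v p T) :
    i ∈ bestOn v p S := by
  simp only [bestOn, Finset.mem_filter] at hi ⊢
  exact ⟨hiS, hi.2.1, fun j hj => hi.2.2 j (hST hj)⟩

theorem bestOn_subset_of_mem (hST : S ⊆ T) (hiS : i ∈ S) (hi : i ∈ bestOn v p T) :
    bestOn v p S ⊆ bestOn v p T := by
  intro k hk
  simp only [bestOn, Finset.mem_filter] at hi hk ⊢
  exact ⟨hST hk.1, hk.2.1, fun j hj => (hi.2.2 j hj).trans (hk.2.2 i hiS)⟩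

theorem revenueOn_eq_of_min'_mem (hST : S ⊆ T) (h : (bestOn v p T).Nonempty)
    (hS : (bestOn v p T).min' h ∈ S) : revenueOn S v p = revenueOn T v p := by
  set i := (bestOn v p T).min' h
  have hi : i ∈ bestOn v p T := Finset.min'_mem _ h
  have hiS : i ∈ bestOn v p S := mem_bestOn_of_subset hST hS hi
  have hne : (bestOn v p S).Nonempty := ⟨i, hiS⟩
  rw [revenueOn_eq_dite, revenueOn_eq_dite, dif_pos hne, dif_pos h]
  exact congrArg p <| le_antisymm (Finset.min'_le _ _ hiS)
    (Finset.min'_subset hne (bestOn_subset_of_mem hST hS hi))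

theorem revenue_le_revenueOn_add_tail [NeZero n] (v : Fin n → ℝ) {P : Fin n → ℝ}
    (hP : ∀ i, 0 ≤ P i) {α : ℝ} (hα : 0 < α) :
    revenue v P ≤ revenueOn (Finset.univ.filter fun i => P i ≤ α) v P +
      (if α ≤ Finset.univ.sup' Finset.univ_nonempty v then
        Finset.univ.sup' Finset.univ_nonempty v else 0) := by
  set S := Finset.univ.filter fun i => P i ≤ α
  set M := Finset.univ.sup' Finset.univ_nonempty v
  have hS := revenueOn_nonneg v hP S
  have htail : 0 ≤ if α ≤ M then M else 0 := by split_ifs <;> linarith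
  rw [revenue_eq_revenueOn_univ]
  by_cases h : (bestOn v P Finset.univ).Nonempty
  · set i := (bestOn v P Finset.univ).min' h
    have hi : i ∈ bestOn v P Finset.univ := Finset.min'_mem _ h
    have hrev : revenueOn Finset.univ v P = P i := by rw [revenueOn_eq_dite, dif_pos h]
    by_cases hcheap : P i ≤ α
    · rw [← revenueOn_eq_of_min'_mem (Finset.subset_univ S) h (by simpa [S] using hcheap)]
      linarith
    · have hgap : 0 ≤ v i - P i := (Finset.mem_filter.1 hi).2.1
      have hviM : v i ≤ M := Finset.le_sup' v (Finset.mem_univ i)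
      rw [hrev, if_pos (by linarith)]
      linarith
  · rw [revenueOn_eq_dite, dif_neg h]
    linarith

end UnitDemand

/-- **Removing the expensive items loses at most the tail of the maximum.**
Let `α > 0` and `S(α) = E[max_i v_i · 1{max_i v_i ≥ α}]`.  For any (nonnegative) price
vector `P`, setting every price greater than `α` to `+∞` — i.e. restricting the sale to
the items priced at most `α` — yields expected revenue `R_{P'} ≥ R_P - S(α)`. -/
theorem remove_expensive_items {n : ℕ} [NeZero n] {Ω : Type*} [MeasurableSpace Ω]
    (μ : Measure Ω) [IsProbabilityMeasure μ] (V : Ω → Fin n → ℝ)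
    (P : Fin n → ℝ) (hP : ∀ i, 0 ≤ P i) (α : ℝ) (hα : 0 < α)
    (h1 : Integrable (fun ω => revenue (V ω) P) μ)
    (h2 : Integrable
      (fun ω => revenueOn (Finset.univ.filter fun i => P i ≤ α) (V ω) P) μ)
    (h3 : Integrable (fun ω =>
      if α ≤ Finset.univ.sup' Finset.univ_nonempty (V ω) then
        Finset.univ.sup' Finset.univ_nonempty (V ω) else 0) μ) :
    (∫ ω, revenue (V ω) P ∂μ) -
        (∫ ω, (if α ≤ Finset.univ.sup' Finset.univ_nonempty (V ω) then
          Finset.univ.sup' Finset.univ_nonempty (V ω) else 0) ∂μ)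
      ≤ ∫ ω, revenueOn (Finset.univ.filter fun i => P i ≤ α) (V ω) P ∂μ := by
  rw [sub_le_iff_le_add, ← integral_add h2 h3]
  exact integral_mono h1 (h2.add h3) fun ω => UnitDemand.revenue_le_revenueOn_add_tail (V ω) hP hα
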